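/- Let g_n(a, b) = p_n^{-1} ∑_{i=1}^{p_n} (a_i − b_i)^2 for a, b ∈ ℝ^{p_n}, and for a ∈ ℝ^{p_n} let â denote its projection onto the isotonic cone {y : y_1 ≤ y_2 ≤ … ≤ y_{p_n}} (the Pool-Adjacent-Violators fit minimizing g_n(a, ·)). If a and b have all components in [1, Λ] with Λ ≥ 1, then |g_n(a, â) − g_n(b, b̂)| ≤ 4·Λ·√(g_n(a, b)). -/

import Mathlib

/-!
Clamping `b̂` into `[1, Λ]` keeps it monotone and only moves it closer to `b`, so the
clamped vector `c` is a competitor for `â`: `g(a, â) - g(b, b̂) ≤ g(a, c) - g(b, c)`.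
For entries in `[1, Λ]`, the difference of squares
`(aᵢ - cᵢ)² - (bᵢ - cᵢ)² = (aᵢ - bᵢ)(aᵢ + bᵢ - 2cᵢ)` is at most `2(Λ - 1)|aᵢ - bᵢ|`,
and Cauchy–Schwarz bounds the mean of `|aᵢ - bᵢ|` by `√(g(a, b))`.
-/

open Finset Set

section MeanSqDist

variable {ι : Type*} [Fintype ι]

noncomputable def meanSqDist (x y : ι → ℝ) : ℝ :=
  (∑ i, (x i - y i) ^ 2) / Fintype.card ι

lemma meanSqDist_comm (x y : ι → ℝ) : meanSqDist x y = meanSqDist y x := by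
  simp only [meanSqDist, ← neg_sub (x _), neg_sq]

lemma sum_abs_sub_div_card_le_sqrt_meanSqDist (x y : ι → ℝ) :
    (∑ i, |x i - y i|) / Fintype.card ι ≤ √(meanSqDist x y) := by
  apply Real.le_sqrt_of_sq_le
  simpa only [meanSqDist, sq_abs, card_univ] using
    sum_div_card_sq_le_sum_sq_div_card (s := univ) (f := fun i => |x i - y i|)

lemma meanSqDist_le_meanSqDist {x y z : ι → ℝ} (h : ∀ i, |x i - y i| ≤ |x i - z i|) :
    meanSqDist x y ≤ meanSqDist x z := by
  unfold meanSqDist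
  gcongr ?_ / _
  exact sum_le_sum fun i _ => sq_le_sq.mpr (h i)

lemma sq_sub_sub_sq_sub_le {lo hi x y z : ℝ} (hx : x ∈ Icc lo hi) (hy : y ∈ Icc lo hi)
    (hz : z ∈ Icc lo hi) : (x - z) ^ 2 - (y - z) ^ 2 ≤ 2 * (hi - lo) * |x - y| := by
  obtain ⟨hx₁, hx₂⟩ := hx
  obtain ⟨hy₁, hy₂⟩ := hy
  obtain ⟨hz₁, hz₂⟩ := hz
  rcases le_total x y with hxy | hxy
  · rw [abs_of_nonpos (sub_nonpos.mpr hxy)]; nlinarith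
  · rw [abs_of_nonneg (sub_nonneg.mpr hxy)]; nlinarith

lemma meanSqDist_sub_meanSqDist_le {lo hi : ℝ} (h : lo ≤ hi) {x y z : ι → ℝ}
    (hx : ∀ i, x i ∈ Icc lo hi) (hy : ∀ i, y i ∈ Icc lo hi)
    (hz : ∀ i, z i ∈ Icc lo hi) :
    meanSqDist x z - meanSqDist y z ≤ 2 * (hi - lo) * √(meanSqDist x y) := by
  have : 0 ≤ hi - lo := sub_nonneg.mpr h
  calc meanSqDist x z - meanSqDist y z
      ≤ 2 * (hi - lo) * ((∑ i, |x i - y i|) / Fintype.card ι) := by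
        rw [meanSqDist, meanSqDist, ← sub_div, ← sum_sub_distrib, mul_div_assoc', mul_sum]
        gcongr with i
        exact sq_sub_sub_sq_sub_le (hx i) (hy i) (hz i)
    _ ≤ 2 * (hi - lo) * √(meanSqDist x y) := by
        gcongr
        exact sum_abs_sub_div_card_le_sqrt_meanSqDist x y

lemma abs_sub_projIcc_le {lo hi x : ℝ} (h : lo ≤ hi) (hx : x ∈ Icc lo hi) (t : ℝ) :
    |x - projIcc lo hi h t| ≤ |x - t| := by
  simpa only [projIcc_of_mem h hx] using abs_projIcc_sub_projIcc h (c := x) (d := t)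

variable [Preorder ι]

theorem meanSqDist_isotonicFit_sub_le {lo hi : ℝ} (h : lo ≤ hi) {a b ahat bhat : ι → ℝ}
    (ha : ∀ i, a i ∈ Icc lo hi) (hb : ∀ i, b i ∈ Icc lo hi)
    (hahat : ∀ y : ι → ℝ, Monotone y → meanSqDist a ahat ≤ meanSqDist a y)
    (hbhat : Monotone bhat) :
    meanSqDist a ahat - meanSqDist b bhat ≤ 2 * (hi - lo) * √(meanSqDist a b) := by
  set c : ι → ℝ := fun i => projIcc lo hi h (bhat i)
  have hc : ∀ i, c i ∈ Icc lo hi := fun i => (projIcc lo hi h (bhat i)).2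
  have hac : meanSqDist a ahat ≤ meanSqDist a c :=
    hahat c fun i j hij => Subtype.mono_coe _ (monotone_projIcc h (hbhat hij))
  have hbc : meanSqDist b c ≤ meanSqDist b bhat :=
    meanSqDist_le_meanSqDist fun i => abs_sub_projIcc_le h (hb i) (bhat i)
  linarith [meanSqDist_sub_meanSqDist_le h ha hb hc]

end MeanSqDist

theorem stmt_15_general {p : ℕ} (Λ : ℝ) (hΛ : 1 ≤ Λ)
    (a b ahat bhat : Fin p → ℝ)
    (ha : ∀ i, a i ∈ Set.Icc 1 Λ) (hb : ∀ i, b i ∈ Set.Icc 1 Λ)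
    (g : (Fin p → ℝ) → (Fin p → ℝ) → ℝ)
    (hg : ∀ x y, g x y = (p : ℝ)⁻¹ * ∑ i, (x i - y i) ^ 2)
    (hahat : Monotone ahat ∧ ∀ y : Fin p → ℝ, Monotone y → g a ahat ≤ g a y)
    (hbhat : Monotone bhat ∧ ∀ y : Fin p → ℝ, Monotone y → g b bhat ≤ g b y) :
    |g a ahat - g b bhat| ≤ 4 * Λ * Real.sqrt (g a b) := by
  obtain rfl : g = meanSqDist := funext₂ fun x y => by
    rw [hg, meanSqDist, Fintype.card_fin, inv_mul_eq_div]
  have hab := meanSqDist_isotonicFit_sub_le hΛ ha hb hahat.2 hbhat.1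
  have hba := meanSqDist_isotonicFit_sub_le hΛ hb ha hbhat.2 hahat.1
  rw [meanSqDist_comm b a] at hba
  rw [abs_sub_le_iff]
  constructor <;> nlinarith [Real.sqrt_nonneg (meanSqDist a b)]

/-- Stability of the isotonic (PAV) fit: if `a, b` have entries in `[1, Λ]` and `â, b̂` are
their isotonic projections, then `|g(a, â) − g(b, b̂)| ≤ 4Λ √(g(a, b))`, where
`g(x, y) = p⁻¹ ∑ (xᵢ − yᵢ)²`. -/
theorem stmt_15 {p : ℕ} (hp : 0 < p) (Λ : ℝ) (hΛ : 1 ≤ Λ)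
    (a b ahat bhat : Fin p → ℝ)
    (ha : ∀ i, a i ∈ Set.Icc 1 Λ) (hb : ∀ i, b i ∈ Set.Icc 1 Λ)
    (g : (Fin p → ℝ) → (Fin p → ℝ) → ℝ)
    (hg : ∀ x y, g x y = (p : ℝ)⁻¹ * ∑ i, (x i - y i) ^ 2)
    (hahat : Monotone ahat ∧ ∀ y : Fin p → ℝ, Monotone y → g a ahat ≤ g a y)
    (hbhat : Monotone bhat ∧ ∀ y : Fin p → ℝ, Monotone y → g b bhat ≤ g b y) :
    |g a ahat - g b bhat| ≤ 4 * Λ * Real.sqrt (g a b) :=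
  stmt_15_general Λ hΛ a b ahat bhat ha hb g hg hahat hbhat
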